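/- If a pseudotree T has at least two roots, then the roots of T form a directed cycle in T: there is a cyclic ordering of the set Υ(T) of roots such that consecutive roots are joined by edges of T all oriented in the same direction around the cycle. -/

import Mathlib

/-- A finite simple directed graph: a finite vertex set, a finite set of directed
edges (ordered pairs) between vertices, with no self-loops. Since `edges` is a
`Finset`, there are no repeated edges. -/
structure FinDigraph (V : Type*) [DecidableEq V] where
  verts : Finset V
  edges : Finset (V × V)
  mem_fst : ∀ e ∈ edges, e.1 ∈ verts
  mem_snd : ∀ e ∈ edges, e.2 ∈ verts
  no_loops : ∀ e ∈ edges, e.1 ≠ e.2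

namespace FinDigraph

variable {V : Type*} [DecidableEq V]

/-- Adjacency in the underlying undirected graph. -/
def Adj (G : FinDigraph V) (a b : V) : Prop := (a, b) ∈ G.edges ∨ (b, a) ∈ G.edges

/-- `G` is connected if its underlying undirected graph is connected. -/
def Connected (G : FinDigraph V) : Prop :=
  G.verts.Nonempty ∧ ∀ u ∈ G.verts, ∀ v ∈ G.verts, Relation.ReflTransGen G.Adj u v

/-- The set of in-neighbors of `j`. -/
def inNbrs (G : FinDigraph V) (j : V) : Finset V := G.verts.filter fun i => (i, j) ∈ G.edges

/-- The set of out-neighbors of `j`. -/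
def outNbrs (G : FinDigraph V) (j : V) : Finset V := G.verts.filter fun i => (j, i) ∈ G.edges

/-- The sinks of `G`: vertices without out-neighbors. -/
def sinks (G : FinDigraph V) : Finset V := G.verts.filter fun j => G.outNbrs j = ∅

/-- The sources of `G`: vertices without in-neighbors. -/
def sources (G : FinDigraph V) : Finset V := G.verts.filter fun j => G.inNbrs j = ∅

def IsSubgraph (H G : FinDigraph V) : Prop := H.verts ⊆ G.verts ∧ H.edges ⊆ G.edges

/-- A (directed) pseudotree: a connected simple directed graph with at least two
vertices in which every vertex has at most one in-neighbor. -/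
def IsPseudotree (T : FinDigraph V) : Prop :=
  T.Connected ∧ 2 ≤ T.verts.card ∧ ∀ j ∈ T.verts, (T.inNbrs j).card ≤ 1

/-- An anti-pseudotree: a connected simple directed graph with at least two
vertices in which every vertex has at most one out-neighbor. -/
def IsAntiPseudotree (T : FinDigraph V) : Prop :=
  T.Connected ∧ 2 ≤ T.verts.card ∧ ∀ j ∈ T.verts, (T.outNbrs j).card ≤ 1

/-- `l` is the list of vertices visited by a directed path from `u` to `v`:
consecutive vertices are joined by directed edges, and no vertex repeats. -/
def IsPath (G : FinDigraph V) (u v : V) (l : List V) : Prop :=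
  l ≠ [] ∧ l.Chain' (fun a b => (a, b) ∈ G.edges) ∧ l.Nodup ∧
    l.head? = some u ∧ l.getLast? = some v

/-- `r` is a root of `T` if there is exactly one directed path from `r`
to every other vertex of `T`. -/
def IsRoot (T : FinDigraph V) (r : V) : Prop :=
  r ∈ T.verts ∧ ∀ v ∈ T.verts, v ≠ r → ∃! l : List V, T.IsPath r v l

/-- `Υ(T)`: the set of roots of `T`. -/
def roots (T : FinDigraph V) : Set V := {r | T.IsRoot r}

/-- A leaf: a vertex of `T` without out-neighbors in `T`. -/
def IsLeaf (T : FinDigraph V) (v : V) : Prop := v ∈ T.verts ∧ T.outNbrs v = ∅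

/-- The edges of `E` outgoing from `j`. -/
def outEdges (E : Finset (V × V)) (j : V) : Finset (V × V) := E.filter fun e => e.1 = j

/-- The edges of `E` incoming to (ending at) `j`. -/
def inEdges (E : Finset (V × V)) (j : V) : Finset (V × V) := E.filter fun e => e.2 = j

/-- Two pseudotrees are disjoint if (1) they share no edges and (2) for every
vertex of their union, all outgoing edges (within the union of the edge sets)
belong to one and the same pseudotree. -/
def DisjointPTrees (T1 T2 : FinDigraph V) : Prop :=
  T1.edges ∩ T2.edges = ∅ ∧
  ∀ j ∈ T1.verts ∪ T2.verts,
    outEdges (T1.edges ∪ T2.edges) j ⊆ T1.edges ∨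
    outEdges (T1.edges ∪ T2.edges) j ⊆ T2.edges

/-- Two anti-pseudotrees are disjoint if they share no edges and, for every
vertex of their union, all incoming edges of that vertex are in a single one
of the two anti-pseudotrees. -/
def DisjointAntiPTrees (T1 T2 : FinDigraph V) : Prop :=
  T1.edges ∩ T2.edges = ∅ ∧
  ∀ j ∈ T1.verts ∪ T2.verts,
    inEdges (T1.edges ∪ T2.edges) j ⊆ T1.edges ∨
    inEdges (T1.edges ∪ T2.edges) j ⊆ T2.edges

/-- The union of two digraphs. -/
def union (T1 T2 : FinDigraph V) : FinDigraph V where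
  verts := T1.verts ∪ T2.verts
  edges := T1.edges ∪ T2.edges
  mem_fst := fun e he => by
    rcases Finset.mem_union.mp he with h | h
    · exact Finset.mem_union_left _ (T1.mem_fst e h)
    · exact Finset.mem_union_right _ (T2.mem_fst e h)
  mem_snd := fun e he => by
    rcases Finset.mem_union.mp he with h | h
    · exact Finset.mem_union_left _ (T1.mem_snd e h)
    · exact Finset.mem_union_right _ (T2.mem_snd e h)
  no_loops := fun e he => by
    rcases Finset.mem_union.mp he with h | h
    · exact T1.no_loops e h
    · exact T2.no_loops e h

/-- `T1` is mergeable to `T2`: they are disjoint pseudotrees sharing a vertex,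
their union graph is a pseudotree, and there is a directed path (in the union)
from every root of `T2` to every vertex of `T1`. -/
def Mergeable (T1 T2 : FinDigraph V) : Prop :=
  DisjointPTrees T1 T2 ∧ (T1.verts ∩ T2.verts).Nonempty ∧
  IsPseudotree (union T1 T2) ∧
  ∀ r ∈ roots T2, ∀ v ∈ T1.verts, ∃ l : List V, (union T1 T2).IsPath r v l

/-- The minimal star pseudotree rooted at `j`: vertex `j` together with all its
out-neighbors in `G`, and all the edges of `G` outgoing from `j`. -/
def star (G : FinDigraph V) (j : V) : FinDigraph V where
  verts := insert j (G.outNbrs j)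
  edges := G.edges.filter fun e => e.1 = j
  mem_fst := fun e he => by
    have h := Finset.mem_filter.mp he
    simp [h.2]
  mem_snd := fun e he => by
    have h := Finset.mem_filter.mp he
    have h2 : e.2 ∈ G.outNbrs j := by
      refine Finset.mem_filter.mpr ⟨G.mem_snd e h.1, ?_⟩
      have he' : e = (j, e.2) := by
        obtain ⟨a, b⟩ := e
        simp only at h ⊢
        rw [h.2]
      rw [← he']
      exact h.1
    exact Finset.mem_insert_of_mem h2
  no_loops := fun e he => G.no_loops e (Finset.mem_filter.mp he).1

/-- The minimal anti-star rooted at `j`: vertex `j` together with all its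
in-neighbors in `G`, and all the edges of `G` incoming to `j`. -/
def antiStar (G : FinDigraph V) (j : V) : FinDigraph V where
  verts := insert j (G.inNbrs j)
  edges := G.edges.filter fun e => e.2 = j
  mem_fst := fun e he => by
    have h := Finset.mem_filter.mp he
    have h2 : e.1 ∈ G.inNbrs j := by
      refine Finset.mem_filter.mpr ⟨G.mem_fst e h.1, ?_⟩
      have he' : e = (e.1, j) := by
        obtain ⟨a, b⟩ := e
        simp only at h ⊢
        rw [h.2]
      rw [← he']
      exact h.1
    exact Finset.mem_insert_of_mem h2
  mem_snd := fun e he => by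
    have h := Finset.mem_filter.mp he
    simp [h.2]
  no_loops := fun e he => G.no_loops e (Finset.mem_filter.mp he).1

end FinDigraph

/-- The three-element set `𝕄 = {1, 0, ∅}`. -/
inductive MSym : Type
  | one
  | zero
  | emp
deriving DecidableEq

/-- The commutative operator `⊙` on `𝕄`:
`1⊙1 = 1`, `1⊙0 = 0`, `1⊙∅ = 1`, `0⊙0 = 0`, `∅⊙0 = 0`, `∅⊙∅ = ∅`. -/
def modot : MSym → MSym → MSym
  | .zero, _ => .zero
  | _, .zero => .zero
  | .one, _ => .one
  | _, .one => .one
  | .emp, .emp => .emp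

open Classical in
/-- The characteristic matrix of a (disjoint pseudotree) covering `T`:
entry `(i,j)` is `1` if `T i` is mergeable to `T j`, `∅` if they share no
vertices, and `0` otherwise. -/
noncomputable def charMat {V : Type*} [DecidableEq V] {ι : Type*} (T : ι → FinDigraph V) :
    ι → ι → MSym := fun i j =>
  if FinDigraph.Mergeable (T i) (T j) then .one
  else if (T i).verts ∩ (T j).verts = ∅ then .emp
  else .zero

/-- The reduction `F(M, i, j)`: replace row `j` by (row `i`) ⊙ (row `j`),
replace column `j` by (column `i`) ⊙ (column `j`), then delete row and
column `i`. -/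
def reduceF {n : ℕ} (M : Fin n → Fin n → MSym) (i j : Fin n) :
    {k : Fin n // k ≠ i} → {k : Fin n // k ≠ i} → MSym := fun a b =>
  let M1 : Fin n → Fin n → MSym := fun p q => if p = j then modot (M i q) (M j q) else M p q
  let M2 : Fin n → Fin n → MSym := fun p q => if q = j then modot (M1 p i) (M1 p j) else M1 p q
  M2 a.val b.val

section Aux

namespace FinDigraph

variable {V : Type*} [DecidableEq V]

private lemma chain_prefix_aux {α : Type*} {r : α → α → Prop}
    (hr : ∀ ⦃a b c⦄, r a b → r a c → b = c) :
    ∀ (l m : List α), l.Chain' r → m.Chain' r → l.head? = m.head? →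
      l.length ≤ m.length → l <+: m := by
  intro l
  induction l with
  | nil => intro m _ _ _ _; exact List.nil_prefix
  | cons a t ih =>
    intro m hl hm hh hlen
    match m with
    | [] => simp at hlen
    | b :: s =>
      have hab : a = b := by simpa using hh
      subst hab
      match t, s with
      | [], s => simp [List.cons_prefix_cons]
      | c :: t', [] => simp at hlen
      | c :: t', d :: s' =>
        have hcd : c = d := hr (List.isChain_cons_cons.mp hl).1 (List.isChain_cons_cons.mp hm).1
        subst hcd
        have hpre := ih (c :: s') (List.isChain_cons_cons.mp hl).2 (List.isChain_cons_cons.mp hm).2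
          rfl (by simpa using hlen)
        exact List.cons_prefix_cons.mpr ⟨rfl, hpre⟩

variable {T : FinDigraph V}

private lemma path_suffix (hdeg : ∀ ⦃a b c⦄, (a, c) ∈ T.edges → (b, c) ∈ T.edges → a = b)
    {u u' v : V} {l m : List V} (hl : T.IsPath u v l) (hm : T.IsPath u' v m)
    (hlen : l.length ≤ m.length) : l <:+ m := by
  rw [← List.reverse_prefix]
  refine chain_prefix_aux (r := fun a b => (b, a) ∈ T.edges)
    (fun a b c h1 h2 => hdeg h1 h2) _ _ ?_ ?_ ?_ (by simpa using hlen)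
  · exact List.isChain_reverse.mpr hl.2.1
  · exact List.isChain_reverse.mpr hm.2.1
  · rw [List.head?_reverse, List.head?_reverse, hl.2.2.2.2, hm.2.2.2.2]

private lemma head_mem_of_path {u v : V} {l : List V} (hl : T.IsPath u v l) : u ∈ l := by
  cases l with
  | nil => exact absurd rfl hl.1
  | cons a t =>
    have : a = u := by have := hl.2.2.2.1; simpa using this
    simp [this]

private lemma path_eq_of_suffix {u v : V} {l m : List V} (hl : T.IsPath u v l)
    (hm : T.IsPath u v m) (h : l <:+ m) : l = m := by
  obtain ⟨s, rfl⟩ := h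
  cases s with
  | nil => simp
  | cons a s' =>
    exfalso
    have ha : a = u := by have := hm.2.2.2.1; simpa using this
    have hu : u ∈ l := head_mem_of_path hl
    have hnd : (a :: (s' ++ l)).Nodup := by simpa using hm.2.2.1
    exact (List.nodup_cons.mp hnd).1 (by rw [ha]; exact List.mem_append_right _ hu)

private lemma path_unique (hdeg : ∀ ⦃a b c⦄, (a, c) ∈ T.edges → (b, c) ∈ T.edges → a = b)
    {u v : V} {l m : List V} (hl : T.IsPath u v l) (hm : T.IsPath u v m) : l = m := by
  rcases le_total l.length m.length with h | h
  · exact path_eq_of_suffix hl hm (path_suffix hdeg hl hm h)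
  · exact (path_eq_of_suffix hm hl (path_suffix hdeg hm hl h)).symm

private lemma exists_last_edge {u v : V} {l : List V} (hl : T.IsPath u v l)
    (huv : u ≠ v) : ∃ p l', (p, v) ∈ T.edges ∧ l = l' ++ [v] ∧ T.IsPath u p l' := by
  rcases List.eq_nil_or_concat l with rfl | ⟨L, b, rfl⟩
  · exact absurd rfl hl.1
  · rw [List.concat_eq_append] at *
    have hb : b = v := by
      have := hl.2.2.2.2
      simpa [List.getLast?_append] using this
    subst hb
    have hLne : L ≠ [] := by
      rintro rfl
      exact huv (Eq.symm (by simpa using hl.2.2.2.1))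
    have hchain := List.isChain_append.mp hl.2.1
    have hlast : L.getLast? = some (L.getLast hLne) := List.getLast?_eq_getLast hLne
    refine ⟨L.getLast hLne, L, ?_, rfl, ?_, ?_, ?_, ?_, hlast⟩
    · exact hchain.2.2 _ hlast _ rfl
    · exact hLne
    · exact hchain.1
    · exact (List.nodup_append.mp hl.2.2.1).1
    · have := hl.2.2.2.1
      cases L with
      | nil => exact absurd rfl hLne
      | cons x xs => simpa using this

open Classical in
private noncomputable def predV (T : FinDigraph V) (v : V) : V :=
  if h : ∃ p, (p, v) ∈ T.edges then h.choose else v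

private lemma predV_eq (hdeg : ∀ ⦃a b c⦄, (a, c) ∈ T.edges → (b, c) ∈ T.edges → a = b)
    {p v : V} (h : (p, v) ∈ T.edges) : T.predV v = p := by
  rw [predV, dif_pos ⟨p, h⟩]
  exact hdeg (⟨p, h⟩ : ∃ q, (q, v) ∈ T.edges).choose_spec h

private lemma root_edge (hdeg : ∀ ⦃a b c⦄, (a, c) ∈ T.edges → (b, c) ∈ T.edges → a = b)
    {r s : V} (h : r ∈ T.roots) (hs : s ∈ T.roots) (hsr : s ≠ r) :
    (T.predV r, r) ∈ T.edges := by
  obtain ⟨l, hl, -⟩ := hs.2 r h.1 (Ne.symm hsr)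
  obtain ⟨p, l', hp, -, -⟩ := exists_last_edge hl hsr
  rw [predV_eq hdeg hp]
  exact hp

private lemma pred_root (hdeg : ∀ ⦃a b c⦄, (a, c) ∈ T.edges → (b, c) ∈ T.edges → a = b)
    {r p : V} (h : r ∈ T.roots) (hpr : (p, r) ∈ T.edges) : p ∈ T.roots := by
  refine ⟨T.mem_fst _ hpr, fun v hv hvp => ?_⟩
  have hpne : p ≠ r := T.no_loops _ hpr
  have hex : ∃ l, T.IsPath p v l := by
    by_cases hvr : v = r
    · subst hvr
      exact ⟨[p, v], by simp, by simp [List.Chain', List.isChain_cons_cons, hpr], by simp [hpne], rfl, rfl⟩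
    · obtain ⟨l, hl, -⟩ := h.2 v hv hvr
      by_cases hpl : p ∈ l
      · obtain ⟨l1, l2, rfl⟩ := List.append_of_mem hpl
        refine ⟨p :: l2, by simp, ?_, ?_, rfl, ?_⟩
        · exact hl.2.1.suffix ⟨l1, rfl⟩
        · exact (List.nodup_append.mp hl.2.2.1).2.1
        · have := hl.2.2.2.2
          simpa [List.getLast?_append] using this
      · cases l with
        | nil => exact absurd rfl hl.1
        | cons a t =>
          have har : a = r := by have := hl.2.2.2.1; simpa using this
          subst har
          refine ⟨p :: a :: t, by simp, ?_, ?_, rfl, ?_⟩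
          · exact List.isChain_cons_cons.mpr ⟨hpr, hl.2.1⟩
          · exact List.nodup_cons.mpr ⟨hpl, hl.2.2.1⟩
          · simpa using hl.2.2.2.2
  obtain ⟨l, hl⟩ := hex
  exact ⟨l, hl, fun m hm => path_unique hdeg hm hl⟩

private lemma root_inj (hdeg : ∀ ⦃a b c⦄, (a, c) ∈ T.edges → (b, c) ∈ T.edges → a = b)
    {r1 r2 q : V} (h1 : r1 ∈ T.roots) (h2 : r2 ∈ T.roots)
    (e1 : (q, r1) ∈ T.edges) (e2 : (q, r2) ∈ T.edges) : r1 = r2 := by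
  by_contra hne
  obtain ⟨L, hL, -⟩ := h1.2 r2 h2.1 (Ne.symm hne)
  obtain ⟨p, P, hpv, hLP, hP⟩ := exists_last_edge hL hne
  have hpq : p = q := hdeg hpv e2
  rw [hpq] at hP
  obtain ⟨M, hM, -⟩ := h2.2 r1 h1.1 hne
  obtain ⟨p', Q, hp'v, hMQ, hQ⟩ := exists_last_edge hM (Ne.symm hne)
  have hp'q : p' = q := hdeg hp'v e1
  rw [hp'q] at hQ
  have hr2P : r2 ∉ P := by
    have := hL.2.2.1
    rw [hLP] at this
    intro hmem
    exact ((List.nodup_append'.mp this).2.2 hmem (by simp))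
  have hr1Q : r1 ∉ Q := by
    have := hM.2.2.1
    rw [hMQ] at this
    intro hmem
    exact ((List.nodup_append'.mp this).2.2 hmem (by simp))
  rcases le_total P.length Q.length with hle | hle
  · exact hr1Q ((path_suffix hdeg hP hQ hle).subset (head_mem_of_path hP))
  · exact hr2P ((path_suffix hdeg hQ hP hle).subset (head_mem_of_path hQ))

private lemma chain_mem_orbit (hdeg : ∀ ⦃a b c⦄, (a, c) ∈ T.edges → (b, c) ∈ T.edges → a = b)
    (r0 : V) :
    ∀ l : List V, l.Chain' (fun a b => (a, b) ∈ T.edges) →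
      (∀ x, l.getLast? = some x → ∃ k, (T.predV)^[k] r0 = x) →
      ∀ y ∈ l, ∃ k, (T.predV)^[k] r0 = y := by
  intro l
  induction l with
  | nil => simp
  | cons a t ih =>
    intro hc hlast y hy
    cases t with
    | nil =>
      have : y = a := by simpa using hy
      subst this
      exact hlast y (by simp)
    | cons b t' =>
      have hall := ih (List.isChain_cons_cons.mp hc).2
        (fun x hx => hlast x (by simpa using hx))
      rcases List.mem_cons.mp hy with rfl | hy'
      · obtain ⟨k, hk⟩ := hall b (by simp)
        refine ⟨k + 1, ?_⟩
        rw [Function.iterate_succ_apply', hk, predV_eq hdeg (List.isChain_cons_cons.mp hc).1]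
      · exact hall y hy'

end FinDigraph

end Aux
/-- if a pseudotree has at least two roots, then its roots form a
directed cycle: there is a cyclic ordering of `Υ(T)` such that consecutive roots
are joined by edges of `T`, all oriented in the same direction around the cycle. -/
theorem statement_7 {V : Type*} [DecidableEq V] (T : FinDigraph V)
    (hT : T.IsPseudotree) (hr : 2 ≤ T.roots.ncard) :
    ∃ (n : ℕ) (hn : 2 ≤ n) (c : Fin n → V),
      Function.Injective c ∧ Set.range c = T.roots ∧
      ∀ i : Fin n, (c i, c ⟨(i.val + 1) % n, Nat.mod_lt _ (by omega)⟩) ∈ T.edges := by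
  classical
  have hdeg : ∀ ⦃a b c : V⦄, (a, c) ∈ T.edges → (b, c) ∈ T.edges → a = b := by
    intro a b c ha hb
    have hc : c ∈ T.verts := T.mem_snd _ ha
    exact Finset.card_le_one.mp (hT.2.2 c hc) a
      (Finset.mem_filter.mpr ⟨T.mem_fst _ ha, ha⟩) b
      (Finset.mem_filter.mpr ⟨T.mem_fst _ hb, hb⟩)
  have hfin : T.roots.Finite :=
    Set.Finite.subset T.verts.finite_toSet (fun r h => h.1)
  have hnt : T.roots.Nontrivial := by
    obtain ⟨a, ha, b, hb, hab⟩ := (Set.one_lt_ncard hfin).mp (by omega)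
    exact ⟨a, ha, b, hb, hab⟩
  have hstep : ∀ r ∈ T.roots, (T.predV r, r) ∈ T.edges := by
    intro r h
    obtain ⟨s, hs, hsr⟩ := hnt.exists_ne r
    exact FinDigraph.root_edge hdeg h hs hsr
  have hroots_f : ∀ r ∈ T.roots, T.predV r ∈ T.roots :=
    fun r h => FinDigraph.pred_root hdeg h (hstep r h)
  obtain ⟨r0, hr0⟩ : T.roots.Nonempty := hnt.nonempty
  set f := T.predV with hfdef
  have hiter : ∀ k, f^[k] r0 ∈ T.roots := by
    intro k
    induction k with
    | zero => exact hr0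
    | succ k ih => rw [Function.iterate_succ_apply']; exact hroots_f _ ih
  have key : ∀ a, (f^[a + 1] r0, f^[a] r0) ∈ T.edges := by
    intro a
    rw [Function.iterate_succ_apply']
    exact hstep _ (hiter a)
  have hcancel : ∀ i k, f^[i] r0 = f^[i + k] r0 → f^[k] r0 = r0 := by
    intro i
    induction i with
    | zero => intro k h; simpa using h.symm
    | succ i ih =>
      intro k h
      rw [Function.iterate_succ_apply',
        show i + 1 + k = (i + k) + 1 by omega, Function.iterate_succ_apply'] at h
      refine ih k (FinDigraph.root_inj hdeg (q := f (f^[i] r0)) (hiter i) (hiter (i + k)) ?_ ?_)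
      · exact (Function.iterate_succ_apply' f i r0) ▸ key i
      · rw [h]
        exact (Function.iterate_succ_apply' f (i + k) r0) ▸ key (i + k)
  have hex : ∃ m, 0 < m ∧ f^[m] r0 = r0 := by
    have hmaps : ∀ k ∈ Finset.range (hfin.toFinset.card + 1), f^[k] r0 ∈ hfin.toFinset :=
      fun k _ => hfin.mem_toFinset.mpr (hiter k)
    obtain ⟨i, -, j, -, hij, hfij⟩ :=
      Finset.exists_ne_map_eq_of_card_lt_of_maps_to (by simp) hmaps
    rcases Nat.lt_or_ge i j with hlt | hge
    · exact ⟨j - i, by omega, hcancel i (j - i) (by rw [hfij]; congr 1; omega)⟩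
    · have hlt : j < i := by omega
      exact ⟨i - j, by omega, hcancel j (i - j) (by rw [← hfij]; congr 1; omega)⟩
  set m := Nat.find hex with hmdef
  obtain ⟨hm0, hmfix⟩ : 0 < m ∧ f^[m] r0 = r0 := Nat.find_spec hex
  have hmin : ∀ k, 0 < k → f^[k] r0 = r0 → m ≤ k := fun k h1 h2 => Nat.find_min' hex ⟨h1, h2⟩
  have hdist : ∀ i j, i < j → j < m → f^[i] r0 ≠ f^[j] r0 := by
    intro i j hij hjm h
    have := hcancel i (j - i) (by rw [h]; congr 1; omega)
    have := hmin (j - i) (by omega) this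
    omega
  have hm2 : 2 ≤ m := by
    by_contra h
    have hm1 : m = 1 := by omega
    have h1 : f r0 = r0 := by
      rw [← Function.iterate_one f, ← hm1]; exact hmfix
    have hnl := T.no_loops _ (hstep r0 hr0)
    exact hnl (by simpa using h1)
  have hmul : ∀ q, f^[m * q] r0 = r0 := by
    intro q
    induction q with
    | zero => simp
    | succ q ih =>
      rw [show m * (q + 1) = m + m * q by ring, Function.iterate_add_apply, ih, hmfix]
  have hmod : ∀ k, f^[k] r0 = f^[k % m] r0 := by
    intro k
    conv_lhs => rw [show k = k % m + m * (k / m) by rw [Nat.mod_add_div]]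
    rw [Function.iterate_add_apply, hmul]
  have hOR : ∀ r ∈ T.roots, ∃ k < m, f^[k] r0 = r := by
    intro r hmem
    have hexk : ∃ k, f^[k] r0 = r := by
      by_cases hrr : r = r0
      · exact ⟨0, hrr.symm⟩
      · obtain ⟨l, hl, -⟩ := hmem.2 r0 hr0.1 (fun h => hrr h.symm)
        refine FinDigraph.chain_mem_orbit hdeg r0 l hl.2.1 ?_ r (FinDigraph.head_mem_of_path hl)
        intro x hx
        rw [hl.2.2.2.2] at hx
        exact ⟨0, by simpa using hx⟩
    obtain ⟨k, hk⟩ := hexk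
    exact ⟨k % m, Nat.mod_lt _ hm0, by rw [← hmod]; exact hk⟩
  refine ⟨m, hm2, fun i => f^[m - 1 - i.val] r0, ?_, ?_, ?_⟩
  · intro i j h
    simp only at h
    have hi : m - 1 - i.val < m := by omega
    have hj : m - 1 - j.val < m := by omega
    have : m - 1 - i.val = m - 1 - j.val := by
      by_contra hne
      rcases Nat.lt_or_ge (m - 1 - i.val) (m - 1 - j.val) with hlt | hge
      · exact hdist _ _ hlt hj h
      · exact hdist _ _ (by omega) hi h.symm
    have hi' := i.isLt
    have hj' := j.isLt
    exact Fin.ext (by omega)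
  · ext r
    constructor
    · rintro ⟨i, rfl⟩
      exact hiter _
    · intro hmem
      obtain ⟨k, hkm, hk⟩ := hOR r hmem
      refine ⟨⟨m - 1 - k, by omega⟩, ?_⟩
      simp only
      rw [show m - 1 - (m - 1 - k) = k by omega]
      exact hk
  · intro i
    simp only
    have him := i.isLt
    rcases Nat.lt_or_ge (i.val + 1) m with hlt | hge
    · rw [Nat.mod_eq_of_lt hlt, show m - 1 - i.val = (m - 1 - (i.val + 1)) + 1 by omega]
      exact key _
    · have hieq : i.val + 1 = m := by omega
      rw [hieq, Nat.mod_self, show m - 1 - i.val = 0 by omega]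
      have := key (m - 1)
      rw [show m - 1 + 1 = m by omega, hmfix] at this
      simpa using this
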